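/- Let X be a δ-hyperbolic metric space and Σ a bounded set of isometries of X. Then D(Σ) = sup { D(B) : B ⊆ Σ, B finite and nonempty }, where D denotes the joint stable length. -/

import Mathlib

open Filter Topology Function

/-- The set `Sⁿ` of all compositions of `n` elements of `S`. -/
def powSet {X : Type*} (S : Set (X → X)) (n : ℕ) : Set (X → X) :=
  {g | ∃ l : List (X → X), l.length = n ∧ (∀ f ∈ l, f ∈ S) ∧ g = l.foldr (· ∘ ·) id}

/-- The joint displacement `|S|ₓ = sup_{f ∈ S} d(fx, x)`. -/
noncomputable def dispSup {X : Type*} [MetricSpace X] (x : X) (S : Set (X → X)) : ℝ :=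
  sSup ((fun f => dist (f x) x) '' S)

/-- The joint stable length `D(S) = inf_{n ≥ 1} |Sⁿ|ₓ / n`
(which equals `lim_n |Sⁿ|ₓ / n` by Fekete's lemma). -/
noncomputable def jointStable {X : Type*} [MetricSpace X] (S : Set (X → X)) (x : X) : ℝ :=
  ⨅ n : ℕ, dispSup x (powSet S (n + 1)) / (n + 1)

/-!
Monotonicity gives `D(B) ≤ D(Σ)`. Conversely, take `n` with `|Σⁿ|ₓ ≈ n D(Σ)` and a nearly
longest word `ab` of `Σ²ⁿ`, with `a, b ∈ Σⁿ`. Then `d(ax, x) + d(bx, x) ≈ d(abx, x)`, i.e. the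
Gromov product `(x · abx)_{ax}` is small, and four applications of the four point condition show
that for one of `w = a, b, ab` also `(x · w²x)_{wx}` is small: `x` lies near an axis of `w`. Along
an axis the orbit grows linearly, `d(wᵏx, x) ≥ k (d(wx, x) - 2 (x · w²x)_{wx} - 2δ)`, so the
finitely many letters of `w` already have joint stable length close to `D(Σ)`.
-/

section Words

variable {X : Type*}

theorem foldr_comp_append (l₁ l₂ : List (X → X)) :
    (l₁ ++ l₂).foldr (· ∘ ·) id = l₁.foldr (· ∘ ·) id ∘ l₂.foldr (· ∘ ·) id := by
  induction l₁ with
  | nil => rfl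
  | cons f l ih => simp only [List.cons_append, List.foldr_cons, ih]; rfl

theorem powSet_zero (S : Set (X → X)) : powSet S 0 = {id} := by
  ext g
  constructor
  · rintro ⟨l, hlen, -, rfl⟩
    rw [List.length_eq_zero_iff.1 hlen]
    rfl
  · rintro rfl
    exact ⟨[], rfl, by simp, rfl⟩

theorem powSet_mono {B S : Set (X → X)} (h : B ⊆ S) (n : ℕ) : powSet B n ⊆ powSet S n := by
  rintro g ⟨l, hlen, hl, rfl⟩
  exact ⟨l, hlen, fun f hf => h (hl f hf), rfl⟩

theorem comp_mem_powSet {S : Set (X → X)} {a b : X → X} {m n : ℕ}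
    (ha : a ∈ powSet S m) (hb : b ∈ powSet S n) : a ∘ b ∈ powSet S (m + n) := by
  obtain ⟨l₁, rfl, h₁, rfl⟩ := ha
  obtain ⟨l₂, rfl, h₂, rfl⟩ := hb
  refine ⟨l₁ ++ l₂, List.length_append, ?_, (foldr_comp_append _ _).symm⟩
  intro f hf
  rcases List.mem_append.1 hf with h | h
  exacts [h₁ f h, h₂ f h]

theorem exists_comp_of_mem_powSet_add {S : Set (X → X)} {g : X → X} {m n : ℕ}
    (hg : g ∈ powSet S (m + n)) : ∃ a ∈ powSet S m, ∃ b ∈ powSet S n, g = a ∘ b := by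
  obtain ⟨l, hlen, hl, rfl⟩ := hg
  refine ⟨_, ⟨l.take m, ?_, fun f hf => hl f (List.take_subset m l hf), rfl⟩,
    _, ⟨l.drop m, ?_, fun f hf => hl f (List.drop_subset m l hf), rfl⟩, ?_⟩
  · rw [List.length_take, hlen]; omega
  · rw [List.length_drop, hlen]; omega
  · rw [← foldr_comp_append, List.take_append_drop]

theorem iterate_mem_powSet {S : Set (X → X)} {w : X → X} {L : ℕ} (hw : w ∈ powSet S L) :
    ∀ k : ℕ, w^[k] ∈ powSet S (k * L)
  | 0 => by rw [iterate_zero, Nat.zero_mul, powSet_zero]; rfl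
  | k + 1 => by
    rw [iterate_succ', Nat.succ_mul, Nat.add_comm]
    exact comp_mem_powSet hw (iterate_mem_powSet hw k)

theorem exists_finite_of_mem_powSet {S : Set (X → X)} {w : X → X} {L : ℕ}
    (hw : w ∈ powSet S L) (hL : 1 ≤ L) :
    ∃ B ⊆ S, B.Finite ∧ B.Nonempty ∧ w ∈ powSet B L := by
  obtain ⟨l, rfl, hl, rfl⟩ := hw
  obtain ⟨f, hf⟩ := List.exists_mem_of_length_pos hL
  exact ⟨{f | f ∈ l}, fun f hf => hl f hf, l.finite_toSet, ⟨f, hf⟩, l, rfl, fun _ h => h, rfl⟩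

theorem isometry_of_mem_powSet [PseudoEMetricSpace X] {S : Set (X → X)}
    (hS : ∀ f ∈ S, Isometry f) {g : X → X} {n : ℕ} (hg : g ∈ powSet S n) : Isometry g := by
  obtain ⟨l, -, hl, rfl⟩ := hg
  induction l with
  | nil => exact isometry_id
  | cons f l ih =>
    exact (hS f (hl f List.mem_cons_self)).comp (ih fun g hg => hl g (List.mem_cons_of_mem _ hg))

end Words

section Displacement

variable {X : Type*} [MetricSpace X] {S : Set (X → X)} {x : X}

theorem dist_comp_le {a : X → X} (ha : Isometry a) (b : X → X) (x : X) :
    dist (a (b x)) x ≤ dist (b x) x + dist (a x) x :=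
  calc dist (a (b x)) x ≤ dist (a (b x)) (a x) + dist (a x) x := dist_triangle _ _ _
    _ = dist (b x) x + dist (a x) x := by rw [ha.dist_eq]

theorem dispSup_nonneg (x : X) (A : Set (X → X)) : 0 ≤ dispSup x A :=
  Real.sSup_nonneg (by rintro r ⟨g, -, rfl⟩; exact dist_nonneg)

theorem exists_lt_dist_of_lt_dispSup {A : Set (X → X)} {c : ℝ} (hc₀ : 0 ≤ c)
    (hc : c < dispSup x A) : ∃ g ∈ A, c < dist (g x) x := by
  have hne : ((fun f => dist (f x) x) '' A).Nonempty :=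
    Set.nonempty_iff_ne_empty.2 fun h => by rw [dispSup, h, Real.sSup_empty] at hc; linarith
  obtain ⟨_, ⟨g, hg, rfl⟩, hlt⟩ := exists_lt_of_lt_csSup hne hc
  exact ⟨g, hg, hlt⟩

section Bounded

variable (hS : ∀ f ∈ S, Isometry f) {C : ℝ} (hC : ∀ f ∈ S, dist (f x) x ≤ C)
include hS hC

theorem dist_le_of_mem_powSet {g : X → X} {n : ℕ} (hg : g ∈ powSet S n) :
    dist (g x) x ≤ n * C := by
  obtain ⟨l, rfl, hl, rfl⟩ := hg
  induction l with
  | nil => simp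
  | cons f l ih =>
    have hf : f ∈ S := hl f List.mem_cons_self
    have := ih fun g hg => hl g (List.mem_cons_of_mem _ hg)
    simp only [List.foldr_cons, comp_apply, List.length_cons, Nat.cast_succ]
    linarith [dist_comp_le (hS f hf) (l.foldr (· ∘ ·) id) x, hC f hf]

theorem dist_le_dispSup {g : X → X} {n : ℕ} (hg : g ∈ powSet S n) :
    dist (g x) x ≤ dispSup x (powSet S n) :=
  le_csSup ⟨n * C, by rintro _ ⟨g, hg, rfl⟩; exact dist_le_of_mem_powSet hS hC hg⟩ ⟨g, hg, rfl⟩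

theorem dispSup_add_le (m n : ℕ) :
    dispSup x (powSet S (m + n)) ≤ dispSup x (powSet S m) + dispSup x (powSet S n) := by
  refine Real.sSup_le ?_ (add_nonneg (dispSup_nonneg _ _) (dispSup_nonneg _ _))
  rintro _ ⟨g, hg, rfl⟩
  obtain ⟨a, ha, b, hb, rfl⟩ := exists_comp_of_mem_powSet_add hg
  show dist (a (b x)) x ≤ _
  linarith [dist_comp_le (isometry_of_mem_powSet hS ha) b x, dist_le_dispSup hS hC ha,
    dist_le_dispSup hS hC hb]

theorem dispSup_mul_le (n : ℕ) :
    ∀ k : ℕ, dispSup x (powSet S (k * n)) ≤ k * dispSup x (powSet S n)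
  | 0 => by simp [powSet_zero, dispSup]
  | k + 1 => by
    rw [Nat.succ_mul, Nat.cast_succ, add_one_mul]
    linarith [dispSup_add_le hS hC (k * n) n, dispSup_mul_le n k]

theorem dispSup_mono {B : Set (X → X)} (hBS : B ⊆ S) (n : ℕ) :
    dispSup x (powSet B n) ≤ dispSup x (powSet S n) := by
  refine Real.sSup_le ?_ (dispSup_nonneg _ _)
  rintro _ ⟨g, hg, rfl⟩
  exact dist_le_dispSup hS hC (powSet_mono hBS n hg)

end Bounded

end Displacement

section JointStable

variable {X : Type*} [MetricSpace X] {S : Set (X → X)} {x : X}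

theorem bddBelow_range_dispSup_div (S : Set (X → X)) (x : X) :
    BddBelow (Set.range fun n : ℕ => dispSup x (powSet S (n + 1)) / (n + 1)) :=
  ⟨0, by rintro _ ⟨n, rfl⟩; exact div_nonneg (dispSup_nonneg _ _) (by positivity)⟩

theorem jointStable_nonneg (S : Set (X → X)) (x : X) : 0 ≤ jointStable S x :=
  Real.iInf_nonneg fun _ => div_nonneg (dispSup_nonneg _ _) (by positivity)

theorem mul_jointStable_le {m : ℕ} (hm : 1 ≤ m) :
    m * jointStable S x ≤ dispSup x (powSet S m) := by
  obtain ⟨n, rfl⟩ := Nat.exists_eq_add_of_le' hm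
  have h := ciInf_le (bddBelow_range_dispSup_div S x) n
  rw [← jointStable, le_div_iff₀ (by positivity)] at h
  push_cast
  linarith

theorem exists_dispSup_lt_mul {c : ℝ} (h : jointStable S x < c) :
    ∃ m : ℕ, 1 ≤ m ∧ dispSup x (powSet S m) < m * c := by
  obtain ⟨n, hn⟩ := exists_lt_of_ciInf_lt h
  rw [div_lt_iff₀ (by positivity)] at hn
  exact ⟨n + 1, by omega, by push_cast; linarith⟩

theorem div_le_jointStable_of_orbit (hS : ∀ f ∈ S, Isometry f) {C : ℝ}
    (hC : ∀ f ∈ S, dist (f x) x ≤ C) {w : X → X} {L : ℕ} (hw : w ∈ powSet S L) (hL : 1 ≤ L)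
    {M : ℝ} (hM : ∀ k : ℕ, k * M ≤ dist (w^[k] x) x) :
    M / L ≤ jointStable S x := by
  refine le_ciInf fun n => ?_
  have hiter : dist (w^[n + 1] x) x ≤ dispSup x (powSet S (L * (n + 1))) := by
    rw [Nat.mul_comm]
    exact dist_le_dispSup hS hC (iterate_mem_powSet hw (n + 1))
  have hmul := dispSup_mul_le hS hC (n + 1) L
  have hgrow := hM (n + 1)
  rw [div_le_div_iff₀ (by exact_mod_cast hL) (by positivity)]
  push_cast at hgrow
  linarith

theorem jointStable_mono {B : Set (X → X)} (hBS : B ⊆ S) (hS : ∀ f ∈ S, Isometry f) {C : ℝ}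
    (hC : ∀ f ∈ S, dist (f x) x ≤ C) :
    jointStable B x ≤ jointStable S x :=
  ciInf_mono (bddBelow_range_dispSup_div B x) fun n =>
    div_le_div_of_nonneg_right (dispSup_mono hS hC hBS (n + 1)) (by positivity)

end JointStable

section Hyperbolic

variable {X : Type*} [MetricSpace X]

/-- The Gromov product `(y · z)_w` based at `w`. -/
noncomputable def gromovProduct (w y z : X) : ℝ := (dist w y + dist w z - dist y z) / 2

theorem gromovProduct_comm (w y z : X) : gromovProduct w y z = gromovProduct w z y := by
  simp only [gromovProduct, dist_comm y z, add_comm (dist w y)]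

theorem gromovProduct_nonneg (w y z : X) : 0 ≤ gromovProduct w y z := by
  unfold gromovProduct
  linarith [dist_triangle_left y z w]

theorem Isometry.gromovProduct_map {f : X → X} (hf : Isometry f) (w y z : X) :
    gromovProduct (f w) (f y) (f z) = gromovProduct w y z := by
  simp only [gromovProduct, hf.dist_eq]

variable {δ : ℝ} (hδ : 0 ≤ δ)
  (hfpc : ∀ x y s t : X, dist x y + dist s t ≤
    max (dist x s + dist y t) (dist x t + dist y s) + 2 * δ)
include hfpc

theorem min_gromovProduct_sub_le (w y z t : X) :
    min (gromovProduct w y t) (gromovProduct w t z) - δ ≤ gromovProduct w y z := by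
  have h := hfpc y z w t
  simp only [gromovProduct]
  rw [dist_comm y w, dist_comm z w, dist_comm z t] at h
  rcases le_total (dist y t + dist w z) (dist w y + dist t z) with hc | hc
  · rw [max_eq_left hc] at h
    linarith [min_le_right ((dist w y + dist w t - dist y t) / 2)
      ((dist w t + dist w z - dist t z) / 2)]
  · rw [max_eq_right hc] at h
    linarith [min_le_left ((dist w y + dist w t - dist y t) / 2)
      ((dist w t + dist w z - dist t z) / 2)]

include hδ

theorem dist_iterate_add_le_dist_iterate_succ {f : X → X} (hf : Isometry f) (x : X)
    (hM : 0 < dist (f x) x - 2 * (gromovProduct (f x) x (f (f x)) + δ)) (k : ℕ) :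
    dist (f^[k] x) x + (dist (f x) x - 2 * (gromovProduct (f x) x (f (f x)) + δ)) ≤
      dist (f^[k + 1] x) x := by
  induction k with
  | zero =>
    simp only [iterate_zero, id_eq, dist_self, zero_add, iterate_one]
    linarith [gromovProduct_nonneg (f x) x (f (f x))]
  | succ k ih =>
    have e₁ : dist (f x) (f^[k + 2] x) = dist (f^[k + 1] x) x := by
      rw [iterate_succ_apply' f (k + 1), hf.dist_eq, dist_comm]
    have e₂ : dist (f (f x)) (f^[k + 2] x) = dist (f^[k] x) x := by
      rw [iterate_succ_apply', iterate_succ_apply', hf.dist_eq, hf.dist_eq, dist_comm]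
    have e₃ : dist (f x) (f (f x)) = dist (f x) x := by rw [hf.dist_eq, dist_comm]
    have h := min_gromovProduct_sub_le hfpc (f x) (f (f x)) x (f^[k + 2] x)
    rw [gromovProduct_comm (f x) (f (f x)) x] at h
    by_contra! hlt
    have hA : gromovProduct (f x) x (f (f x)) + δ <
        gromovProduct (f x) (f (f x)) (f^[k + 2] x) := by
      simp only [gromovProduct, e₁, e₂, e₃] at ih hM ⊢
      linarith
    have hB : gromovProduct (f x) x (f (f x)) + δ < gromovProduct (f x) (f^[k + 2] x) x := by
      simp only [gromovProduct, e₁, e₃] at hlt ⊢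
      linarith
    linarith [lt_min hA hB]

theorem mul_le_dist_iterate {f : X → X} (hf : Isometry f) (x : X) (k : ℕ) :
    k * (dist (f x) x - 2 * (gromovProduct (f x) x (f (f x)) + δ)) ≤ dist (f^[k] x) x := by
  rcases le_or_gt (dist (f x) x - 2 * (gromovProduct (f x) x (f (f x)) + δ)) 0 with hM | hM
  · exact (mul_nonpos_of_nonneg_of_nonpos k.cast_nonneg hM).trans dist_nonneg
  induction k with
  | zero => simp
  | succ k ih =>
    push_cast
    linarith [dist_iterate_add_le_dist_iterate_succ hδ hfpc hf x hM k]

theorem sub_le_gromovProduct_comp {u v : X → X} (hu : Isometry u) (hv : Isometry v) (x : X)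
    {m : ℝ} (hmu : m ≤ gromovProduct (u x) x (u (u x)))
    (hmv : m ≤ gromovProduct (v x) x (v (v x)))
    (hmuv : m ≤ gromovProduct (u (v x)) x (u (v (u (v x)))))
    (hm₁ : m ≤ gromovProduct x (u x) (u (v x))) (hm₂ : m ≤ gromovProduct (u (v x)) (u x) x) :
    m - 4 * δ ≤ gromovProduct (u x) x (u (v x)) := by
  have h₀ := min_gromovProduct_sub_le hfpc (u (v x)) (u (v (u (v x)))) (u x) x
  have h₁ := min_gromovProduct_sub_le hfpc (u (v x)) (u (v (u x))) (u x) (u (v (u (v x))))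
  have h₂ := min_gromovProduct_sub_le hfpc (v x) (v (u x)) (v (v x)) x
  have h₃ := min_gromovProduct_sub_le hfpc (u x) x (u (v x)) (u (u x))
  rw [gromovProduct_comm _ _ x, gromovProduct_comm (u (v x)) x (u x)] at h₀
  rw [hu.gromovProduct_map, hv.gromovProduct_map, hu.gromovProduct_map (v x) (v (u x)) x] at h₁
  rw [hv.gromovProduct_map] at h₂
  rw [hu.gromovProduct_map] at h₃
  have t₀ : m - δ ≤ gromovProduct (u (v x)) (u (v (u (v x)))) (u x) := by
    linarith [le_min hmuv hm₂]
  have t₁ : m - 2 * δ ≤ gromovProduct (v x) (v (u x)) x := by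
    linarith [le_min (by linarith : m - δ ≤ gromovProduct x (u x) (u (v x))) t₀]
  have t₂ : m - 3 * δ ≤ gromovProduct x (u x) (v x) := by
    linarith [le_min t₁ (by linarith : m - 2 * δ ≤ gromovProduct (v x) x (v (v x)))]
  linarith [le_min (by linarith : m - 3 * δ ≤ gromovProduct (u x) x (u (u x))) t₂]

variable {S : Set (X → X)} (hS : ∀ f ∈ S, Isometry f) {x : X} {C : ℝ}
  (hC : ∀ f ∈ S, dist (f x) x ≤ C)
include hS hC

theorem exists_mem_powSet_gromovProduct_le {n : ℕ} {η : ℝ} (hη : 0 ≤ η)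
    (hn : dispSup x (powSet S n) ≤ n * (jointStable S x + η))
    (hlarge : 2 * n * η + 2 + 4 * δ ≤ n * jointStable S x) :
    ∃ L, n ≤ L ∧ ∃ w ∈ powSet S L, L * (jointStable S x - η) - 1 ≤ dist (w x) x ∧
      gromovProduct (w x) x (w (w x)) ≤ n * η + 1 + 4 * δ := by
  have hn₁ : 1 ≤ n := Nat.one_le_iff_ne_zero.2 fun h => by
    simp only [h, Nat.cast_zero] at hlarge; linarith
  have h2n := mul_jointStable_le (S := S) (x := x) (m := n + n) (by omega)
  push_cast at h2n
  obtain ⟨g, hg, hgx⟩ := exists_lt_dist_of_lt_dispSup (c := dispSup x (powSet S (n + n)) - 1)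
    (by nlinarith) (by linarith)
  obtain ⟨a, ha, b, hb, rfl⟩ := exists_comp_of_mem_powSet_add hg
  have hai := isometry_of_mem_powSet hS ha
  have hbi := isometry_of_mem_powSet hS hb
  have hax := (dist_le_dispSup hS hC ha).trans hn
  have hbx := (dist_le_dispSup hS hC hb).trans hn
  have habx := dist_comp_le hai b x
  have e₁ : dist (a x) (a (b x)) = dist (b x) x := by rw [hai.dist_eq, dist_comm]
  have e₂ : dist (a (b x)) (a x) = dist (b x) x := hai.dist_eq _ _
  rw [comp_apply] at hgx
  have hG₁ : n * η + 1 + 4 * δ ≤ gromovProduct x (a x) (a (b x)) := by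
    simp only [gromovProduct, e₁, dist_comm x]
    linarith
  have hG₂ : n * η + 1 + 4 * δ ≤ gromovProduct (a (b x)) (a x) x := by
    simp only [gromovProduct, e₂]
    linarith
  have hsmall : gromovProduct (a x) x (a (b x)) < n * η + 1 := by
    simp only [gromovProduct, e₁, dist_comm x]
    linarith
  have key : gromovProduct (a x) x (a (a x)) ≤ n * η + 1 + 4 * δ ∨
      gromovProduct (b x) x (b (b x)) ≤ n * η + 1 + 4 * δ ∨
      gromovProduct (a (b x)) x (a (b (a (b x)))) ≤ n * η + 1 + 4 * δ := by
    by_contra! h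
    linarith [sub_le_gromovProduct_comp hδ hfpc hai hbi x h.1.le h.2.1.le h.2.2.le hG₁ hG₂]
  rcases key with h | h | h
  · exact ⟨n, le_rfl, a, ha, by linarith, h⟩
  · exact ⟨n, le_rfl, b, hb, by linarith, h⟩
  · refine ⟨n + n, by omega, a ∘ b, hg, ?_, h⟩
    rw [comp_apply]
    push_cast
    nlinarith

theorem exists_finite_subset_sub_le_jointStable (hne : S.Nonempty) {ε : ℝ} (hε : 0 < ε) :
    ∃ B ⊆ S, B.Finite ∧ B.Nonempty ∧ jointStable S x - ε ≤ jointStable B x := by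
  rcases le_or_gt (jointStable S x) ε with hSε | hSε
  · obtain ⟨f, hf⟩ := hne
    exact ⟨{f}, Set.singleton_subset_iff.2 hf, Set.finite_singleton f, Set.singleton_nonempty f,
      by linarith [jointStable_nonneg {f} x]⟩
  obtain ⟨m, hm, hmS⟩ := exists_dispSup_lt_mul (S := S) (x := x)
    (c := jointStable S x + ε / 4) (by linarith)
  -- `n ε / 4 ≥ 3 + 10δ` absorbs the additive errors `1 + 2 (n ε / 4 + 1 + 4δ) + 2δ` below.
  obtain ⟨k, hk⟩ := exists_nat_ge ((3 + 10 * δ) / (ε / 4))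
  set n := (k + 1) * m with hn
  have hnS : dispSup x (powSet S n) ≤ n * (jointStable S x + ε / 4) := by
    have := dispSup_mul_le hS hC m (k + 1)
    rw [hn]
    push_cast at this ⊢
    nlinarith
  have hnε : 3 + 10 * δ ≤ n * (ε / 4) := by
    rw [div_le_iff₀ (by positivity)] at hk
    have : (k : ℝ) + 1 ≤ n := by exact_mod_cast Nat.le_mul_of_pos_right _ hm
    nlinarith
  obtain ⟨L, hnL, w, hw, hwx, hwP⟩ := exists_mem_powSet_gromovProduct_le hδ hfpc hS hC
    (by positivity) hnS (by nlinarith)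
  have hL : 1 ≤ L := (Nat.le_add_left 1 k).trans ((Nat.le_mul_of_pos_right _ hm).trans hnL)
  obtain ⟨B, hBS, hBfin, hBne, hwB⟩ := exists_finite_of_mem_powSet hw hL
  refine ⟨B, hBS, hBfin, hBne, le_trans ?_ (div_le_jointStable_of_orbit
    (fun f hf => hS f (hBS hf)) (fun f hf => hC f (hBS hf)) hwB hL
    (mul_le_dist_iterate hδ hfpc (isometry_of_mem_powSet hS hw) x))⟩
  have hnL' : (n : ℝ) ≤ L := by exact_mod_cast hnL
  rw [le_div_iff₀ (by exact_mod_cast hL)]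
  nlinarith

end Hyperbolic

/-- For a bounded set `Σ` of isometries of a `δ`-hyperbolic
metric space, `D(Σ)` is the supremum of `D(B)` over finite nonempty `B ⊆ Σ`. -/
theorem stmt10 {X : Type*} [MetricSpace X] (δ : ℝ) (hδ : 0 ≤ δ)
    (hfpc : ∀ x y s t : X, dist x y + dist s t ≤
      max (dist x s + dist y t) (dist x t + dist y s) + 2 * δ)
    (S : Set (X → X)) (hS : ∀ f ∈ S, Isometry f ∧ Function.Surjective f)
    (hne : S.Nonempty)
    (x : X) (hb : ∃ C : ℝ, ∀ f ∈ S, dist (f x) x ≤ C) :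
    jointStable S x =
      sSup {r : ℝ | ∃ B : Set (X → X),
        B ⊆ S ∧ B.Finite ∧ B.Nonempty ∧ r = jointStable B x} := by
  obtain ⟨C, hC⟩ := hb
  have hSi : ∀ f ∈ S, Isometry f := fun f hf => (hS f hf).1
  have hbdd : BddAbove {r : ℝ | ∃ B : Set (X → X),
      B ⊆ S ∧ B.Finite ∧ B.Nonempty ∧ r = jointStable B x} := by
    refine ⟨jointStable S x, ?_⟩
    rintro _ ⟨B, hBS, -, -, rfl⟩
    exact jointStable_mono hBS hSi hC
  have happrox := fun ε (hε : 0 < ε) =>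
    exists_finite_subset_sub_le_jointStable hδ hfpc hSi hC hne hε
  refine le_antisymm (le_of_forall_sub_le fun ε hε => ?_) (csSup_le ?_ ?_)
  · obtain ⟨B, hBS, hBfin, hBne, hB⟩ := happrox ε hε
    exact hB.trans (le_csSup hbdd ⟨B, hBS, hBfin, hBne, rfl⟩)
  · obtain ⟨B, hBS, hBfin, hBne, -⟩ := happrox 1 one_pos
    exact ⟨_, B, hBS, hBfin, hBne, rfl⟩
  · rintro _ ⟨B, hBS, -, -, rfl⟩
    exact jointStable_mono hBS hSi hC
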